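/- In the non-idempotent intersection type system R (with a nullary application rule allowed), every head-normalizable λ-term is typable; conversely every typable term is head-normalizable. -/

import Mathlib

/-- Untyped λ-terms with de Bruijn indices. -/
inductive Tm : Type
  | var : ℕ → Tm
  | app : Tm → Tm → Tm
  | lam : Tm → Tm

namespace Tm

/-- Lift (shift by `d`) the free variables of index `≥ k`. -/
def lift (d : ℕ) : ℕ → Tm → Tm
  | k, .var m => if m < k then .var m else .var (m + d)
  | k, .app a b => .app (lift d k a) (lift d k b)
  | k, .lam a => .lam (lift d (k + 1) a)

/-- Capture-avoiding substitution of `s` for the variable of index `k`. -/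
def subst (s : Tm) : ℕ → Tm → Tm
  | k, .var m => if m < k then .var m else if m = k then lift k 0 s else .var (m - 1)
  | k, .app a b => .app (subst s k a) (subst s k b)
  | k, .lam a => .lam (subst s (k + 1) a)

end Tm

/-- One step of β-reduction (anywhere in the term). -/
inductive Beta : Tm → Tm → Prop
  | beta (t u : Tm) : Beta (.app (.lam t) u) (Tm.subst u 0 t)
  | appL {a a' : Tm} (b : Tm) : Beta a a' → Beta (.app a b) (.app a' b)
  | appR (a : Tm) {b b' : Tm} : Beta b b' → Beta (.app a b) (.app a b')
  | lam {a a' : Tm} : Beta a a' → Beta (.lam a) (.lam a')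

/-- Non-idempotent intersection types: `α ::= γ | [α₁,…,αₙ] → α`, where `γ`
ranges over a set `A` of type atoms and a finite multiset of types is
represented by a list of types. -/
inductive Ty (A : Type) : Type
  | atom : A → Ty A
  | arrow : List (Ty A) → Ty A → Ty A

/-- Environments map (de Bruijn) variables to finite multisets of types. -/
abbrev Env (A : Type) := ℕ → Multiset (Ty A)

/-- Extend an environment with a multiset of types for the freshly bound
variable `0`. -/
def consEnv {A : Type} (a : Multiset (Ty A)) (Γ : Env A) : Env A
  | 0 => a
  | m + 1 => Γ m

/-- Pointwise sum of an environment and a list of environments. -/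
def sumEnv {A : Type} (Γ₀ : Env A) (Γs : List (Env A)) : Env A :=
  fun m => Γ₀ m + (Γs.map fun Γ => Γ m).sum

/-- The typing judgements of System R: as R^ex except that the `var` rule
requires `x : [α]` and empty multisets on the other variables, and the `app`
rule allows `n = 0` typings of the argument. -/
inductive TypingR (A : Type) : Env A → Tm → Ty A → Prop
  | var (x : ℕ) (α : Ty A) :
      TypingR A (fun m => if m = x then {α} else 0) (.var x) α
  | abs {Γ : Env A} {a : List (Ty A)} {t : Tm} {α : Ty A}
      (h : TypingR A (consEnv (↑a) Γ) t α) :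
      TypingR A Γ (.lam t) (.arrow a α)
  | app {Γ₀ : Env A} {Γs : List (Env A)} {v u : Tm} {as : List (Ty A)} {α : Ty A}
      (hv : TypingR A Γ₀ v (.arrow as α))
      (hlen : Γs.length = as.length)
      (hu : ∀ i (hi : i < as.length) (hj : i < Γs.length),
        TypingR A (Γs.get ⟨i, hj⟩) u (as.get ⟨i, hi⟩)) :
      TypingR A (sumEnv Γ₀ Γs) (.app v u) α

/-- `headVar t`: `t` is a variable applied to a (possibly empty) sequence of
arguments. -/
def headVar : Tm → Prop
  | .var _ => True
  | .app a _ => headVar a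
  | .lam _ => False

/-- Head normal forms: `λx₁…x_k. y t₁ … t_m`. -/
def isHNF : Tm → Prop
  | .var _ => True
  | .app a _ => headVar a
  | .lam t => isHNF t

/-!
Derivations in System R are measured by their number of nodes. Types being non-idempotent,
substituting the derivations of an argument into a derivation of the body consumes each of them
exactly once, so contracting a head redex strictly shrinks a derivation: head reduction of a
typed term therefore stops, at a head normal form. Conversely a head normal form
`λx₁…x_k. y t₁ … t_m` is typable (giving `y` the type `[] → ⋯ → [] → γ` leaves the arguments
untyped), and typings survive β-expansion by the converse anti-substitution lemma.
-/

section

variable {A : Type}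

theorem Multiset.exists_eq_add_of_map_eq_add {α β : Type*} {f : α → β} {s : Multiset α}
    {t₀ t₁ : Multiset β} (h : s.map f = t₀ + t₁) :
    ∃ s₀ s₁, s = s₀ + s₁ ∧ s₀.map f = t₀ ∧ s₁.map f = t₁ := by
  obtain ⟨s₀, s₁, h₀, h₁, rfl⟩ :=
    Multiset.rel_add_right.1 (Multiset.rel_map_left.1 (Multiset.rel_eq.2 h))
  exact ⟨s₀, s₁, rfl, Multiset.rel_eq.1 (Multiset.rel_map_left.2 h₀),
    Multiset.rel_eq.1 (Multiset.rel_map_left.2 h₁)⟩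

theorem sumEnv_eq_add_sum (Γ₀ : Env A) (Γs : List (Env A)) :
    sumEnv Γ₀ Γs = Γ₀ + Γs.sum := by
  funext m
  simp [sumEnv, Pi.list_sum_apply]

theorem consEnv_add (a b : Multiset (Ty A)) (Γ Δ : Env A) :
    consEnv a Γ + consEnv b Δ = consEnv (a + b) (Γ + Δ) := by
  funext m
  cases m <;> rfl

theorem consEnv_inj {a b : Multiset (Ty A)} {Γ Δ : Env A} :
    consEnv a Γ = consEnv b Δ ↔ a = b ∧ Γ = Δ := by
  refine ⟨fun h => ⟨congrFun h 0, funext fun m => congrFun h (m + 1)⟩, ?_⟩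
  rintro ⟨rfl, rfl⟩
  rfl

theorem exists_eq_consEnv (Γ : Env A) : ∃ a Γ', Γ = consEnv a Γ' :=
  ⟨Γ 0, fun m => Γ (m + 1), funext fun m => by cases m <;> rfl⟩

/-- Insert `δ` empty slots at position `k`: the environment counterpart of `Tm.lift δ k`. -/
def liftEnv (δ k : ℕ) : Env A →+ Env A where
  toFun Γ m := if m < k then Γ m else if m < k + δ then 0 else Γ (m - δ)
  map_zero' := by funext m; simp
  map_add' Γ Δ := by funext m; simp only [Pi.add_apply]; split_ifs <;> simp

def lowerEnv (δ k : ℕ) : Env A →+ Env A where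
  toFun Γ m := Γ (if m < k then m else m + δ)
  map_zero' := rfl
  map_add' _ _ := rfl

theorem liftEnv_zero (k : ℕ) (Γ : Env A) : liftEnv 0 k Γ = Γ := by
  funext m
  simp only [liftEnv, AddMonoidHom.coe_mk, ZeroHom.coe_mk]
  split_ifs <;> first | rfl | omega

theorem liftEnv_consEnv (δ k : ℕ) (a : Multiset (Ty A)) (Γ : Env A) :
    liftEnv δ (k + 1) (consEnv a Γ) = consEnv a (liftEnv δ k Γ) := by
  funext m
  cases m with
  | zero => simp [liftEnv, consEnv]
  | succ m =>
    simp only [liftEnv, AddMonoidHom.coe_mk, ZeroHom.coe_mk, consEnv]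
    split_ifs <;> first | rfl | omega | rw [show m + 1 - δ = m - δ + 1 by omega]

theorem liftEnv_succ_zero (δ : ℕ) (Γ : Env A) :
    liftEnv (δ + 1) 0 Γ = consEnv 0 (liftEnv δ 0 Γ) := by
  funext m
  cases m with
  | zero => simp [liftEnv, consEnv]
  | succ m =>
    simp only [liftEnv, AddMonoidHom.coe_mk, ZeroHom.coe_mk, consEnv, Nat.add_sub_add_right]
    split_ifs <;> first | rfl | omega

theorem liftEnv_single (δ k x : ℕ) (a : Multiset (Ty A)) :
    liftEnv δ k (Pi.single x a) = Pi.single (if x < k then x else x + δ) a := by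
  funext m
  simp only [liftEnv, AddMonoidHom.coe_mk, ZeroHom.coe_mk, Pi.single_apply]
  split_ifs <;> first | rfl | omega

theorem lowerEnv_consEnv (δ k : ℕ) (a : Multiset (Ty A)) (Γ : Env A) :
    lowerEnv δ (k + 1) (consEnv a Γ) = consEnv a (lowerEnv δ k Γ) := by
  funext m
  cases m with
  | zero => rfl
  | succ m =>
    simp only [lowerEnv, AddMonoidHom.coe_mk, ZeroHom.coe_mk, Nat.add_right_comm m 1 δ, consEnv]
    split_ifs <;> first | rfl | omega

theorem lowerEnv_one_zero_consEnv (a : Multiset (Ty A)) (Γ : Env A) :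
    lowerEnv 1 0 (consEnv a Γ) = Γ :=
  rfl

theorem lowerEnv_single_lift (δ k x : ℕ) (a : Multiset (Ty A)) :
    lowerEnv δ k (Pi.single (if x < k then x else x + δ) a) = Pi.single x a := by
  funext m
  simp only [lowerEnv, AddMonoidHom.coe_mk, ZeroHom.coe_mk, Pi.single_apply]
  split_ifs <;> first | rfl | omega

theorem lowerEnv_one_single_of_ne {x k : ℕ} (hx : x ≠ k) (a : Multiset (Ty A)) :
    lowerEnv 1 k (Pi.single x a) = Pi.single (if x < k then x else x - 1) a := by
  funext m
  simp only [lowerEnv, AddMonoidHom.coe_mk, ZeroHom.coe_mk, Pi.single_apply]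
  split_ifs <;> first | rfl | omega

theorem lowerEnv_one_single_self (k : ℕ) (a : Multiset (Ty A)) :
    lowerEnv 1 k (Pi.single k a) = 0 := by
  funext m
  simp only [lowerEnv, AddMonoidHom.coe_mk, ZeroHom.coe_mk, Pi.single_apply, Pi.zero_apply]
  split_ifs <;> first | rfl | omega

structure Judgment (A : Type) where
  env : Env A
  ty : Ty A
  size : ℕ

/-- `SizedTypingR A Γ t α n`: `Γ ⊢ t : α` has a System R derivation with `n` nodes. The premises
of an application form one list of judgments instead of two index-aligned lists. -/
inductive SizedTypingR (A : Type) : Env A → Tm → Ty A → ℕ → Prop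
  | var (x : ℕ) (α : Ty A) : SizedTypingR A (Pi.single x {α}) (.var x) α 1
  | abs {Γ : Env A} {a : List (Ty A)} {t : Tm} {α : Ty A} {n : ℕ}
      (h : SizedTypingR A (consEnv (↑a) Γ) t α n) :
      SizedTypingR A Γ (.lam t) (.arrow a α) (n + 1)
  | app {Γ : Env A} {v u : Tm} {α : Ty A} {n : ℕ} (D : List (Judgment A))
      (hv : SizedTypingR A Γ v (.arrow (D.map Judgment.ty) α) n)
      (hu : ∀ j ∈ D, SizedTypingR A j.env u j.ty j.size) :
      SizedTypingR A (Γ + (D.map Judgment.env).sum) (.app v u) α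
        (n + (D.map Judgment.size).sum + 1)

theorem typingR_iff_exists_sizedTypingR {Γ : Env A} {t : Tm} {α : Ty A} :
    TypingR A Γ t α ↔ ∃ n, SizedTypingR A Γ t α n := by
  constructor
  · intro h
    induction h with
    | var x α =>
      refine ⟨1, ?_⟩
      convert SizedTypingR.var x α using 1
      funext m
      simp [Pi.single_apply]
    | abs _ ih =>
      obtain ⟨n, h⟩ := ih
      exact ⟨n + 1, .abs h⟩
    | @app Γ₀ Γs _ _ as _ _ hlen _ ihv ihu =>
      obtain ⟨n, hv⟩ := ihv
      choose size hsize using ihu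
      let D := List.ofFn fun i : Fin as.length =>
        (⟨Γs[i], as[i], size i i.2 (by omega)⟩ : Judgment A)
      have hD : D.map Judgment.ty = as := by simp [D, List.map_ofFn, Function.comp_def]
      have hΓs : D.map Judgment.env = Γs := by
        refine List.ext_getElem (by simp [D, hlen]) fun i _ _ => ?_
        simp [D]
      have happ := SizedTypingR.app D (hD ▸ hv) <| by
        simp only [D, List.mem_ofFn, forall_exists_index]
        rintro _ i rfl
        exact hsize i i.2 _
      rw [hΓs, ← sumEnv_eq_add_sum] at happ
      exact ⟨_, happ⟩
  · rintro ⟨n, h⟩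
    induction h with
    | var x α =>
      convert TypingR.var (A := A) x α using 1
      funext m
      simp [Pi.single_apply]
    | abs _ ih => exact .abs ih
    | app D _ _ ihv ihu =>
      rw [← sumEnv_eq_add_sum]
      exact .app ihv (by simp) fun i hi hj => by
        simpa using ihu (D[i]'(by simpa using hi)) (List.getElem_mem _)

theorem Tm.lift_var (δ k x : ℕ) :
    Tm.lift δ k (.var x) = .var (if x < k then x else x + δ) := by
  simp only [Tm.lift]
  split_ifs <;> rfl

theorem Tm.subst_var_of_ne (s : Tm) {x k : ℕ} (hx : x ≠ k) :
    Tm.subst s k (.var x) = .var (if x < k then x else x - 1) := by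
  simp only [Tm.subst]
  split_ifs <;> rfl

theorem isHNF_app_or_eq_lam {v : Tm} (h : isHNF v) (u : Tm) :
    isHNF (.app v u) ∨ ∃ w, v = .lam w := by
  cases v with
  | var => exact .inl trivial
  | app => exact .inl h
  | lam w => exact .inr ⟨w, rfl⟩

/-- The environment contributed by the arguments `E` substituted for the variable `k`: each
argument is substituted under `k` binders, hence lifted by `k`. -/
def liftedSum (k : ℕ) (E : Multiset (Judgment A)) : Env A :=
  (E.map fun j => liftEnv k 0 j.env).sum

@[simp]
theorem liftedSum_zero (k : ℕ) : liftedSum k (0 : Multiset (Judgment A)) = 0 := by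
  simp [liftedSum]

@[simp]
theorem liftedSum_add (k : ℕ) (E₁ E₂ : Multiset (Judgment A)) :
    liftedSum k (E₁ + E₂) = liftedSum k E₁ + liftedSum k E₂ := by
  simp [liftedSum]

theorem liftedSum_zero_left (E : Multiset (Judgment A)) :
    liftedSum 0 E = (E.map Judgment.env).sum := by
  simp [liftedSum, liftEnv_zero]

theorem liftedSum_succ (k : ℕ) (E : Multiset (Judgment A)) :
    liftedSum (k + 1) E = consEnv 0 (liftedSum k E) := by
  funext m
  cases m <;>
    simp [liftedSum, liftEnv_succ_zero, Pi.multiset_sum_apply, Function.comp_def, consEnv]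

namespace SizedTypingR

theorem lift {Γ : Env A} {t : Tm} {α : Ty A} {n : ℕ} (h : SizedTypingR A Γ t α n)
    (δ k : ℕ) :
    SizedTypingR A (liftEnv δ k Γ) (Tm.lift δ k t) α n := by
  induction h generalizing k with
  | var x α =>
    rw [liftEnv_single, Tm.lift_var]
    exact .var _ _
  | abs _ ih => exact .abs (liftEnv_consEnv δ k _ _ ▸ ih (k + 1))
  | app D _ _ ihv ihu =>
    have happ := SizedTypingR.app (D.map fun j => { j with env := liftEnv δ k j.env })
      (by simpa [Function.comp_def] using ihv k) (by simpa using fun j hj => ihu j hj k)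
    simpa [Function.comp_def, map_list_sum, Tm.lift] using happ

theorem of_lift {δ : ℕ} {s : Tm} {k : ℕ} {Γ : Env A} {α : Ty A} {n : ℕ}
    (h : SizedTypingR A Γ (Tm.lift δ k s) α n) :
    SizedTypingR A (lowerEnv δ k Γ) s α n ∧ liftEnv δ k (lowerEnv δ k Γ) = Γ := by
  induction s generalizing k Γ α n with
  | var x =>
    rw [Tm.lift_var] at h
    cases h
    rw [lowerEnv_single_lift, liftEnv_single]
    exact ⟨.var x α, rfl⟩
  | app v u ihv ihu =>
    cases h with
    | app D hv hu =>
      have hu' := fun j hj => ihu (hu j hj)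
      obtain ⟨hv', hΓ⟩ := ihv hv
      have happ := SizedTypingR.app (D.map fun j => { j with env := lowerEnv δ k j.env })
        (by simpa [Function.comp_def] using hv') (by simpa using fun j hj => (hu' j hj).1)
      refine ⟨by simpa [Function.comp_def, map_list_sum] using happ, ?_⟩
      simp only [map_add, map_list_sum, List.map_map, hΓ]
      congr 2
      exact List.map_congr_left fun j hj => (hu' j hj).2
  | lam b ih =>
    cases h with
    | abs hb =>
      obtain ⟨hb', hΓ⟩ := ih hb
      rw [lowerEnv_consEnv] at hb'
      rw [lowerEnv_consEnv, liftEnv_consEnv, consEnv_inj] at hΓ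
      exact ⟨.abs hb', hΓ.2⟩

theorem subst_args {s u : Tm} {k : ℕ} {D : List (Judgment A)}
    (ih : ∀ j ∈ D, ∀ E : Multiset (Judgment A), E.map Judgment.ty = j.env k →
      (∀ e ∈ E, SizedTypingR A e.env s e.ty e.size) →
      ∃ n ≤ j.size + (E.map Judgment.size).sum,
        SizedTypingR A (lowerEnv 1 k j.env + liftedSum k E) (Tm.subst s k u) j.ty n)
    {E : Multiset (Judgment A)} (hE : E.map Judgment.ty = (D.map fun j => j.env k).sum)
    (hs : ∀ e ∈ E, SizedTypingR A e.env s e.ty e.size) :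
    ∃ D' : List (Judgment A), D'.map Judgment.ty = D.map Judgment.ty ∧
      (∀ j ∈ D', SizedTypingR A j.env (Tm.subst s k u) j.ty j.size) ∧
      (D'.map Judgment.env).sum = lowerEnv 1 k (D.map Judgment.env).sum + liftedSum k E ∧
      (D'.map Judgment.size).sum ≤ (D.map Judgment.size).sum + (E.map Judgment.size).sum := by
  induction D generalizing E with
  | nil =>
    obtain rfl : E = 0 := Multiset.map_eq_zero.1 hE
    exact ⟨[], rfl, by simp, by simp, by simp⟩
  | cons j D ihD =>
    obtain ⟨E₁, E₂, rfl, hE₁, hE₂⟩ := Multiset.exists_eq_add_of_map_eq_add hE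
    obtain ⟨n, hn, hj⟩ := ih j List.mem_cons_self E₁ hE₁ fun e he => hs e (by simp [he])
    obtain ⟨D', hty, hD', henv, hsize⟩ := ihD (fun j hj => ih j (List.mem_cons_of_mem _ hj))
      hE₂ fun e he => hs e (by simp [he])
    refine ⟨⟨lowerEnv 1 k j.env + liftedSum k E₁, j.ty, n⟩ :: D', by simp [hty],
      List.forall_mem_cons.2 ⟨hj, hD'⟩, ?_, ?_⟩
    · simp only [List.map_cons, List.sum_cons, henv, map_add, liftedSum_add]
      abel
    · simp only [List.map_cons, List.sum_cons, Multiset.map_add, Multiset.sum_add]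
      omega

theorem subst {s t : Tm} {Δ : Env A} {α : Ty A} {n : ℕ} (h : SizedTypingR A Δ t α n) {k : ℕ}
    {E : Multiset (Judgment A)} (hE : E.map Judgment.ty = Δ k)
    (hs : ∀ j ∈ E, SizedTypingR A j.env s j.ty j.size) :
    ∃ n' ≤ n + (E.map Judgment.size).sum,
      SizedTypingR A (lowerEnv 1 k Δ + liftedSum k E) (Tm.subst s k t) α n' := by
  induction h generalizing k E with
  | var x α =>
    by_cases hx : x = k
    · subst hx
      obtain ⟨j, rfl, rfl⟩ := Multiset.map_eq_singleton.1 (by simpa using hE)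
      refine ⟨j.size, by simp, ?_⟩
      simpa [lowerEnv_one_single_self, liftedSum, Tm.subst] using (hs j (by simp)).lift x 0
    · obtain rfl : E = 0 :=
        (Multiset.map_eq_zero (f := Judgment.ty)).1 (by simp [hE, Ne.symm hx])
      refine ⟨1, by simp, ?_⟩
      rw [lowerEnv_one_single_of_ne hx, liftedSum_zero, add_zero, Tm.subst_var_of_ne s hx]
      exact .var _ _
  | abs _ ih =>
    obtain ⟨n', hn', h'⟩ := ih (k := k + 1) hE hs
    rw [lowerEnv_consEnv, liftedSum_succ, consEnv_add, add_zero] at h'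
    exact ⟨n' + 1, by omega, .abs h'⟩
  | @app Γ _ _ _ _ D _ _ ihv ihu =>
    have hE' : E.map Judgment.ty = Γ k + (D.map fun j => j.env k).sum := by
      simp [hE, Pi.list_sum_apply, Function.comp_def]
    obtain ⟨E₀, E₁, rfl, hE₀, hE₁⟩ := Multiset.exists_eq_add_of_map_eq_add hE'
    obtain ⟨n₀, hn₀, hv⟩ := ihv hE₀ fun j hj => hs j (by simp [hj])
    obtain ⟨D', hty, hD', henv, hsize⟩ := subst_args (fun j hj _ hE hs => ihu j hj hE hs)
      hE₁ fun j hj => hs j (by simp [hj])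
    have henv' : lowerEnv 1 k (Γ + (D.map Judgment.env).sum) + liftedSum k (E₀ + E₁) =
        lowerEnv 1 k Γ + liftedSum k E₀ + (D'.map Judgment.env).sum := by
      rw [henv, map_add, liftedSum_add]
      abel
    refine ⟨_, ?_, henv' ▸ (hty ▸ hv).app D' hD'⟩
    simp only [Multiset.map_add, Multiset.sum_add]
    omega

theorem of_subst_args {s u : Tm} {k : ℕ} {D : List (Judgment A)}
    (ih : ∀ j ∈ D, ∃ (Δ : Env A) (E : Multiset (Judgment A)) (n : ℕ),
      SizedTypingR A Δ u j.ty n ∧ E.map Judgment.ty = Δ k ∧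
      (∀ e ∈ E, SizedTypingR A e.env s e.ty e.size) ∧
      j.env = lowerEnv 1 k Δ + liftedSum k E) :
    ∃ (D' : List (Judgment A)) (E : Multiset (Judgment A)),
      D'.map Judgment.ty = D.map Judgment.ty ∧
      (∀ j ∈ D', SizedTypingR A j.env u j.ty j.size) ∧
      E.map Judgment.ty = (D'.map Judgment.env).sum k ∧
      (∀ e ∈ E, SizedTypingR A e.env s e.ty e.size) ∧
      (D.map Judgment.env).sum = lowerEnv 1 k (D'.map Judgment.env).sum + liftedSum k E := by
  induction D with
  | nil => exact ⟨[], 0, rfl, by simp, by simp, by simp, by simp⟩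
  | cons j D ihD =>
    obtain ⟨Δ, E, n, hj, hE, hs, hΓ⟩ := ih j List.mem_cons_self
    obtain ⟨D', E', hty, hD', hE', hs', henv⟩ :=
      ihD fun j hj => ih j (List.mem_cons_of_mem _ hj)
    refine ⟨⟨Δ, j.ty, n⟩ :: D', E + E', by simp [hty], List.forall_mem_cons.2 ⟨hj, hD'⟩,
      by simp [hE, hE'], fun e he => ?_, ?_⟩
    · rcases Multiset.mem_add.1 he with he | he
      exacts [hs e he, hs' e he]
    · simp only [List.map_cons, List.sum_cons, henv, hΓ, map_add, liftedSum_add]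
      abel

theorem of_subst {s t : Tm} {k : ℕ} {Γ : Env A} {α : Ty A} {n : ℕ}
    (h : SizedTypingR A Γ (Tm.subst s k t) α n) :
    ∃ (Δ : Env A) (E : Multiset (Judgment A)) (n' : ℕ), SizedTypingR A Δ t α n' ∧
      E.map Judgment.ty = Δ k ∧ (∀ j ∈ E, SizedTypingR A j.env s j.ty j.size) ∧
      Γ = lowerEnv 1 k Δ + liftedSum k E := by
  induction t generalizing k Γ α n with
  | var x =>
    by_cases hx : x = k
    · subst hx
      obtain ⟨hs, hΓ⟩ := of_lift (by simpa [Tm.subst] using h)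
      refine ⟨Pi.single x {α}, {⟨lowerEnv x 0 Γ, α, n⟩}, 1, .var x α, by simp,
        by simpa using hs, ?_⟩
      simp [lowerEnv_one_single_self, liftedSum, hΓ]
    · rw [Tm.subst_var_of_ne s hx] at h
      cases h
      exact ⟨Pi.single x {α}, 0, 1, .var x α, by simp [Ne.symm hx], by simp,
        by rw [lowerEnv_one_single_of_ne hx, liftedSum_zero, add_zero]⟩
  | app v u ihv ihu =>
    cases h with
    | app D hv hu =>
      obtain ⟨Δ, E, n, hv, hE, hs, hΓ⟩ := ihv hv
      obtain ⟨D', E', hty, hD', hE', hs', henv⟩ := of_subst_args fun j hj => ihu (hu j hj)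
      refine ⟨Δ + (D'.map Judgment.env).sum, E + E', _, (hty ▸ hv).app D' hD',
        by simp [hE, hE'], fun e he => ?_, ?_⟩
      · rcases Multiset.mem_add.1 he with he | he
        exacts [hs e he, hs' e he]
      · rw [hΓ, henv, map_add, liftedSum_add]
        abel
  | lam b ih =>
    cases h with
    | abs hb =>
      obtain ⟨Δ, E, n, hb', hE, hs, hΓ⟩ := ih hb
      obtain ⟨c, Δ, rfl⟩ := exists_eq_consEnv Δ
      rw [lowerEnv_consEnv, liftedSum_succ, consEnv_add, add_zero, consEnv_inj] at hΓ
      obtain ⟨rfl, rfl⟩ := hΓ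
      exact ⟨Δ, E, n + 1, .abs hb', hE, hs, rfl⟩

theorem beta_lt {w u : Tm} {Γ : Env A} {α : Ty A} {n : ℕ}
    (h : SizedTypingR A Γ (.app (.lam w) u) α n) :
    ∃ n' < n, SizedTypingR A Γ (Tm.subst u 0 w) α n' := by
  obtain _ | _ | ⟨D, hv, hu⟩ := h
  obtain _ | ⟨hw⟩ := hv
  obtain ⟨n', hn', h'⟩ := hw.subst (k := 0) (E := ↑D) (by simp [consEnv]) (by simpa using hu)
  rw [lowerEnv_one_zero_consEnv, liftedSum_zero_left] at h'
  simp only [Multiset.map_coe, Multiset.sum_coe] at hn' h'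
  exact ⟨n', by omega, h'⟩

theorem of_beta {w u : Tm} {Γ : Env A} {α : Ty A} {n : ℕ}
    (h : SizedTypingR A Γ (Tm.subst u 0 w) α n) :
    ∃ n', SizedTypingR A Γ (.app (.lam w) u) α n' := by
  obtain ⟨Δ, E, n, hw, hE, hs, rfl⟩ := of_subst h
  obtain ⟨c, Δ, rfl⟩ := exists_eq_consEnv Δ
  obtain rfl : c = ↑(E.toList.map Judgment.ty) := by
    rw [← Multiset.map_coe, Multiset.coe_toList]
    exact hE.symm
  rw [lowerEnv_one_zero_consEnv, liftedSum_zero_left, ← Multiset.sum_map_toList]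
  exact ⟨_, hw.abs.app E.toList fun j hj => hs j (Multiset.mem_toList.1 hj)⟩

/-- The bound `n' ≤ n` is what lets the induction continue once the function part of an
application has been normalized to an abstraction. -/
theorem exists_isHNF {Γ : Env A} {t : Tm} {α : Ty A} {n : ℕ} (h : SizedTypingR A Γ t α n) :
    ∃ t', Relation.ReflTransGen Beta t t' ∧ isHNF t' ∧
      ∃ n' ≤ n, SizedTypingR A Γ t' α n' := by
  induction n using Nat.strong_induction_on generalizing Γ t α with
  | _ n ih =>
    cases h with
    | var x α => exact ⟨_, .refl, trivial, 1, le_rfl, .var x α⟩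
    | abs hb =>
      obtain ⟨t', hr, hnf, n', hn', h'⟩ := ih _ (by omega) hb
      exact ⟨.lam t', Relation.ReflTransGen.lift Tm.lam (fun _ _ => Beta.lam) _ _ hr, hnf,
        n' + 1, by omega, .abs h'⟩
    | @app _ v u _ _ D hv hu =>
      obtain ⟨v', hr, hnf, n', hn', hv'⟩ := ih _ (by omega) hv
      have hr' : Relation.ReflTransGen Beta (.app v u) (.app v' u) :=
        Relation.ReflTransGen.lift (Tm.app · u) (fun _ _ => Beta.appL u) _ _ hr
      rcases isHNF_app_or_eq_lam hnf u with hnf | ⟨w, rfl⟩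
      · exact ⟨_, hr', hnf, _, by omega, hv'.app D hu⟩
      · obtain ⟨m, hm, hred⟩ := (hv'.app D hu).beta_lt
        obtain ⟨t', hr'', hnf', n'', hn'', h'⟩ := ih m (by omega) hred
        exact ⟨t', hr'.trans (.head (Beta.beta w u) hr''), hnf', n'', by omega, h'⟩

end SizedTypingR

theorem TypingR.of_beta {t t' : Tm} (hb : Beta t t') {Γ : Env A} {α : Ty A}
    (h : TypingR A Γ t' α) : TypingR A Γ t α := by
  induction hb generalizing Γ α with
  | beta w u =>
    obtain ⟨n, h⟩ := typingR_iff_exists_sizedTypingR.1 h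
    exact typingR_iff_exists_sizedTypingR.2 h.of_beta
  | appL _ _ ih =>
    cases h with
    | app hv hlen hu => exact .app (ih hv) hlen hu
  | appR _ _ ih =>
    cases h with
    | app hv hlen hu => exact .app hv hlen fun i hi hj => ih (hu i hi hj)
  | lam _ ih =>
    cases h with
    | abs hb => exact .abs (ih hb)

theorem TypingR.of_reflTransGen {t t' : Tm} (hr : Relation.ReflTransGen Beta t t')
    {Γ : Env A} {α : Ty A} (h : TypingR A Γ t' α) : TypingR A Γ t α := by
  induction hr using Relation.ReflTransGen.head_induction_on with
  | refl => exact h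
  | head hb _ ih => exact TypingR.of_beta hb ih

theorem headVar.exists_typingR {t : Tm} (h : headVar t) (α : Ty A) :
    ∃ Γ, TypingR A Γ t α := by
  induction t generalizing α with
  | var x => exact ⟨_, .var x α⟩
  | app a b iha =>
    obtain ⟨Γ, hΓ⟩ := iha h (.arrow [] α)
    exact ⟨sumEnv Γ [], .app hΓ rfl (by simp)⟩
  | lam => exact h.elim

theorem isHNF.exists_typingR [Nonempty A] {t : Tm} (h : isHNF t) :
    ∃ (Γ : Env A) (α : Ty A), TypingR A Γ t α := by
  obtain ⟨γ⟩ := ‹Nonempty A›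
  induction t with
  | var x => exact ⟨_, .atom γ, .var x _⟩
  | app a b =>
    obtain ⟨Γ, hΓ⟩ := headVar.exists_typingR (t := .app a b) h (.atom γ)
    exact ⟨Γ, _, hΓ⟩
  | lam t ih =>
    obtain ⟨Γ, α, hΓ⟩ := ih h
    obtain ⟨c, Γ, rfl⟩ := exists_eq_consEnv Γ
    exact ⟨Γ, .arrow c.toList α, .abs (by rwa [Multiset.coe_toList])⟩

end

theorem R_typable_iff_head_normalizable_general {A : Type} [Nonempty A] (t : Tm) :
    (∃ (Γ : Env A) (α : Ty A), TypingR A Γ t α) ↔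
      (∃ t', Relation.ReflTransGen Beta t t' ∧ isHNF t') := by
  constructor
  · rintro ⟨Γ, α, h⟩
    obtain ⟨n, h⟩ := typingR_iff_exists_sizedTypingR.1 h
    obtain ⟨t', hr, hnf, -⟩ := h.exists_isHNF
    exact ⟨t', hr, hnf⟩
  · rintro ⟨t', hr, hnf⟩
    obtain ⟨Γ, α, h⟩ := hnf.exists_typingR (A := A)
    exact ⟨Γ, α, h.of_reflTransGen hr⟩

/-- a λ-term is typable in System R if, and only if, it is
head-normalizable (it β-reduces to a head normal form, equivalently its head
reduction terminates). -/
theorem R_typable_iff_head_normalizable {A : Type} [Countable A] [Nonempty A] (t : Tm) :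
    (∃ (Γ : Env A) (α : Ty A), TypingR A Γ t α) ↔
      (∃ t', Relation.ReflTransGen Beta t t' ∧ isHNF t') :=
  R_typable_iff_head_normalizable_general t
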